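/- Under the hypotheses of the full VT-constraint theorem (x with mean-zero unit-variance entries; W^x, V^x, W^u, V^u mutually independent of each other and of x, each with mutually independent mean-zero entries of common variance), the variance of every entry of h'' = V^u [u', u'', u''] satisfies the decomposition Var(h''_i) = V[V^u] · ( C^u_t · Var(u'_1) + (C^u_{t+1} − C^u_t) · Var(u''_1) ), where u' = s^x W^x x has dimension C^u_t and u'' = V^x x has dimension (C^u_{t+1} − C^u_t)/2; i.e. the old-unit and new-unit feature variances contribute to the new weights' output variance in proportion to their respective widths C^u_t and C^u_{t+1} − C^u_t. -/

import Mathlib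

open MeasureTheory ProbabilityTheory

/-- Index for the four weight matrices `W^x, V^x, W^u, V^u` and the input vector `x`. -/
inductive GrowIdx : Type
  | wx | vx | wu | vu | inp
  deriving DecidableEq

/-- Codomain of each of the five random objects (matrices are flattened into real-valued
functions on their index-pair sets). -/
def GrowIdx.codom (Cx Ct m dWu dVu : ℕ) : GrowIdx → Type
  | .wx => Fin Ct × Fin Cx → ℝ
  | .vx => Fin m × Fin Cx → ℝ
  | .wu => Fin dWu × Fin Ct → ℝ
  | .vu => Fin dVu × (Fin Ct ⊕ Fin m ⊕ Fin m) → ℝ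
  | .inp => Fin Cx → ℝ

/-- The Borel product measurable structure on each codomain. -/
def GrowIdx.codomMeasurableSpace (Cx Ct m dWu dVu : ℕ) :
    (i : GrowIdx) → MeasurableSpace (GrowIdx.codom Cx Ct m dWu dVu i)
  | .wx => inferInstanceAs (MeasurableSpace (Fin Ct × Fin Cx → ℝ))
  | .vx => inferInstanceAs (MeasurableSpace (Fin m × Fin Cx → ℝ))
  | .wu => inferInstanceAs (MeasurableSpace (Fin dWu × Fin Ct → ℝ))
  | .vu => inferInstanceAs (MeasurableSpace (Fin dVu × (Fin Ct ⊕ Fin m ⊕ Fin m) → ℝ))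
  | .inp => inferInstanceAs (MeasurableSpace (Fin Cx → ℝ))

/-- The five random objects, bundled as a dependent family indexed by `GrowIdx`. -/
def GrowIdx.rv {Ω : Type*} {Cx Ct m dWu dVu : ℕ}
    (Wx : Fin Ct → Fin Cx → Ω → ℝ) (Vx : Fin m → Fin Cx → Ω → ℝ)
    (Wu : Fin dWu → Fin Ct → Ω → ℝ)
    (Vu : Fin dVu → (Fin Ct ⊕ Fin m ⊕ Fin m) → Ω → ℝ)
    (x : Fin Cx → Ω → ℝ) :
    (i : GrowIdx) → Ω → GrowIdx.codom Cx Ct m dWu dVu i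
  | .wx => fun ω p => Wx p.1 p.2 ω
  | .vx => fun ω p => Vx p.1 p.2 ω
  | .wu => fun ω p => Wu p.1 p.2 ω
  | .vu => fun ω p => Vu p.1 p.2 ω
  | .inp => fun ω j => x j ω

section Aux

variable {Ω : Type*} [MeasurableSpace Ω] {μ : Measure Ω}

/-- Product of two `L²` functions is integrable (Cauchy–Schwarz). -/
lemma aux_int_mul {f g : Ω → ℝ} (hf : MemLp f 2 μ) (hg : MemLp g 2 μ) :
    Integrable (fun ω => f ω * g ω) μ := by
  have h1 : (1 : ENNReal) / 1 = 1 / 2 + 1 / 2 := by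
    rw [ENNReal.div_add_div_same, one_div_one,
      show (1 : ENNReal) + 1 = 2 from one_add_one_eq_two]
    exact (ENNReal.div_self (a := 2) (by norm_num) (by norm_num)).symm
  have := hg.smul (φ := f) (r := 1) hf
  rw [memLp_one_iff_integrable] at this
  exact this

/-- Product of two independent `L²` functions is in `L²`. -/
lemma aux_memL2_mul {X Y : Ω → ℝ} (hXm : Measurable X) (hYm : Measurable Y)
    (hX2 : MemLp X 2 μ) (hY2 : MemLp Y 2 μ) (h : IndepFun X Y μ) :
    MemLp (fun ω => X ω * Y ω) 2 μ := by
  have hsq : IndepFun (fun ω => X ω ^ 2) (fun ω => Y ω ^ 2) μ :=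
    h.comp (measurable_id.pow_const 2) (measurable_id.pow_const 2)
  have hint : Integrable ((fun ω => X ω ^ 2) * (fun ω => Y ω ^ 2)) μ :=
    hsq.integrable_mul hX2.integrable_sq hY2.integrable_sq
  rw [memLp_two_iff_integrable_sq (f := fun ω => X ω * Y ω) ((hXm.mul hYm).aestronglyMeasurable)]
  have heq : (fun ω => (X ω * Y ω) ^ 2)
      = (fun ω => X ω ^ 2) * (fun ω => Y ω ^ 2) := by
    funext ω; simp [Pi.mul_apply]; ring
  rw [heq]
  exact hint

/-- Key computation: variance of a bilinear form `∑ k, W k * Z k` where the mean-zero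
i.i.d.-variance family `W` is independent (as a block) of `Z`, and the entries of `W`
are pairwise independent. -/
lemma aux_var_bilin {κ : Type*} [Fintype κ] (μ : Measure Ω) [IsProbabilityMeasure μ]
    (W Z : κ → Ω → ℝ) (v : ℝ)
    (hWm : ∀ k, Measurable (W k)) (hW2 : ∀ k, MemLp (W k) 2 μ)
    (hZm : ∀ k, Measurable (Z k)) (hZ2 : ∀ k, MemLp (Z k) 2 μ)
    (hWmean : ∀ k, ∫ ω, W k ω ∂μ = 0) (hWvar : ∀ k, variance (W k) μ = v)
    (hpair : ∀ k l, k ≠ l → IndepFun (W k) (W l) μ)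
    (hblock : ∀ k l : κ, IndepFun (fun ω => (W k ω, W l ω)) (fun ω => (Z k ω, Z l ω)) μ) :
    MemLp (fun ω => ∑ k, W k ω * Z k ω) 2 μ ∧
    (∫ ω, ∑ k, W k ω * Z k ω ∂μ) = 0 ∧
    variance (fun ω => ∑ k, W k ω * Z k ω) μ = v * ∑ k, ∫ ω, (Z k ω) ^ 2 ∂μ := by
  classical
  have hWZ : ∀ k l : κ, IndepFun (fun ω => W k ω * W l ω) (fun ω => Z k ω * Z l ω) μ :=
    fun k l => (hblock k l).comp (measurable_fst.mul measurable_snd)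
      (measurable_fst.mul measurable_snd)
  have hWZ1 : ∀ k, IndepFun (W k) (Z k) μ :=
    fun k => (hblock k k).comp measurable_fst measurable_fst
  have hterm2 : ∀ k, MemLp (fun ω => W k ω * Z k ω) 2 μ :=
    fun k => aux_memL2_mul (hWm k) (hZm k) (hW2 k) (hZ2 k) (hWZ1 k)
  have hS2 : MemLp (fun ω => ∑ k, W k ω * Z k ω) 2 μ :=
    memLp_finset_sum Finset.univ fun k _ => hterm2 k
  have hmean : (∫ ω, ∑ k, W k ω * Z k ω ∂μ) = 0 := by
    rw [integral_finset_sum _ fun k _ => (hterm2 k).integrable one_le_two]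
    refine Finset.sum_eq_zero fun k _ => ?_
    have h0 : ∫ ω, (W k * Z k) ω ∂μ = (∫ ω, W k ω ∂μ) * ∫ ω, Z k ω ∂μ :=
      (hWZ1 k).integral_mul_eq_mul_integral (hWm k).aestronglyMeasurable (hZm k).aestronglyMeasurable
    simpa [hWmean k] using h0
  refine ⟨hS2, hmean, ?_⟩
  have hint : ∀ k l : κ, Integrable (fun ω => (W k ω * W l ω) * (Z k ω * Z l ω)) μ := by
    intro k l
    exact (hWZ k l).integrable_mul (aux_int_mul (hW2 k) (hW2 l)) (aux_int_mul (hZ2 k) (hZ2 l))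
  have hsplit : ∀ k l : κ, ∫ ω, (W k ω * W l ω) * (Z k ω * Z l ω) ∂μ
      = (∫ ω, W k ω * W l ω ∂μ) * ∫ ω, Z k ω * Z l ω ∂μ :=
    fun k l => (hWZ k l).integral_mul_eq_mul_integral ((hWm k).mul (hWm l)).aestronglyMeasurable
      ((hZm k).mul (hZm l)).aestronglyMeasurable
  have hcross : ∀ k l : κ, k ≠ l → ∫ ω, (W k ω * W l ω) * (Z k ω * Z l ω) ∂μ = 0 := by
    intro k l hkl
    have h2 : ∫ ω, (W k * W l) ω ∂μ = (∫ ω, W k ω ∂μ) * ∫ ω, W l ω ∂μ :=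
      (hpair k l hkl).integral_mul_eq_mul_integral (hWm k).aestronglyMeasurable (hWm l).aestronglyMeasurable
    rw [hsplit k l]
    have : ∫ ω, W k ω * W l ω ∂μ = 0 := by simpa [hWmean k] using h2
    rw [this, zero_mul]
  have hdiag : ∀ k : κ, ∫ ω, (W k ω * W k ω) * (Z k ω * Z k ω) ∂μ
      = v * ∫ ω, (Z k ω) ^ 2 ∂μ := by
    intro k
    have hv := variance_eq_sub (hW2 k)
    rw [hWvar k, hWmean k] at hv
    have hW2v : ∫ ω, W k ω * W k ω ∂μ = v := by
      simp only [Pi.pow_apply] at hv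
      simp only [pow_two] at hv
      simpa using hv.symm
    rw [hsplit k k, hW2v]
    congr 1
    simp only [pow_two]
  have hvar := variance_eq_sub hS2
  rw [hmean] at hvar
  have hexp : ((fun ω => ∑ k, W k ω * Z k ω) ^ 2)
      = fun ω => ∑ k, ∑ l, (W k ω * W l ω) * (Z k ω * Z l ω) := by
    funext ω
    rw [Pi.pow_apply, sq, Finset.sum_mul_sum]
    exact Finset.sum_congr rfl fun k _ => Finset.sum_congr rfl fun l _ => by ring
  rw [hvar, hexp]
  rw [integral_finset_sum _ fun k _ => integrable_finset_sum _ fun l _ => hint k l]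
  have hinner : ∀ k : κ, (∑ l, ∫ ω, (W k ω * W l ω) * (Z k ω * Z l ω) ∂μ)
      = v * ∫ ω, (Z k ω) ^ 2 ∂μ := by
    intro k
    rw [Finset.sum_eq_single_of_mem k (Finset.mem_univ k)
      (fun l _ hlk => hcross k l (Ne.symm hlk))]
    exact hdiag k
  calc (∑ k, ∫ ω, ∑ l, (W k ω * W l ω) * (Z k ω * Z l ω) ∂μ) - 0 ^ 2
      = ∑ k, ∑ l, ∫ ω, (W k ω * W l ω) * (Z k ω * Z l ω) ∂μ := by
        simp only [ne_eq, OfNat.ofNat_ne_zero, not_false_eq_true, zero_pow, sub_zero]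
        exact Finset.sum_congr rfl fun k _ =>
          integral_finset_sum _ fun l _ => hint k l
    _ = ∑ k, v * ∫ ω, (Z k ω) ^ 2 ∂μ := Finset.sum_congr rfl fun k _ => hinner k
    _ = v * ∑ k, ∫ ω, (Z k ω) ^ 2 ∂μ := by rw [Finset.mul_sum]

end Aux

section Aux2

/-- The triple of the `Wx, Vx, x` blocks. -/
def growTriple {Ω : Type*} {Cx Ct m : ℕ} (Wx : Fin Ct → Fin Cx → Ω → ℝ)
    (Vx : Fin m → Fin Cx → Ω → ℝ) (x : Fin Cx → Ω → ℝ) :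
    Ω → (Fin Ct × Fin Cx → ℝ) × (Fin m × Fin Cx → ℝ) × (Fin Cx → ℝ) :=
  fun ω => (fun p => Wx p.1 p.2 ω, fun p => Vx p.1 p.2 ω, fun c => x c ω)

/-- The grown feature vector as a deterministic function of the `Wx, Vx, x` blocks. -/
def growPhi (Cx Ct m : ℕ) (sx : ℝ) :
    (Fin Ct ⊕ Fin m ⊕ Fin m) →
      ((Fin Ct × Fin Cx → ℝ) × (Fin m × Fin Cx → ℝ) × (Fin Cx → ℝ)) → ℝ :=
  Sum.elim (fun j t => sx * ∑ c, t.1 (j, c) * t.2.2 c)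
    (Sum.elim (fun j t => ∑ c, t.2.1 (j, c) * t.2.2 c)
      (fun j t => ∑ c, t.2.1 (j, c) * t.2.2 c))

lemma growPhi_measurable (Cx Ct m : ℕ) (sx : ℝ) (k : Fin Ct ⊕ Fin m ⊕ Fin m) :
    Measurable (growPhi Cx Ct m sx k) := by
  rcases k with j | j | j
  · show Measurable fun t : (Fin Ct × Fin Cx → ℝ) × (Fin m × Fin Cx → ℝ) × (Fin Cx → ℝ) =>
      sx * ∑ c, t.1 (j, c) * t.2.2 c
    refine measurable_const.mul (Finset.measurable_sum _ fun c _ => Measurable.mul ?_ ?_)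
    · exact (measurable_pi_apply (j, c)).comp measurable_fst
    · exact (measurable_pi_apply c).comp (measurable_snd.comp measurable_snd)
  · show Measurable fun t : (Fin Ct × Fin Cx → ℝ) × (Fin m × Fin Cx → ℝ) × (Fin Cx → ℝ) =>
      ∑ c, t.2.1 (j, c) * t.2.2 c
    refine Finset.measurable_sum _ fun c _ => Measurable.mul ?_ ?_
    · exact (measurable_pi_apply (j, c)).comp (measurable_fst.comp measurable_snd)
    · exact (measurable_pi_apply c).comp (measurable_snd.comp measurable_snd)
  · show Measurable fun t : (Fin Ct × Fin Cx → ℝ) × (Fin m × Fin Cx → ℝ) × (Fin Cx → ℝ) =>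
      ∑ c, t.2.1 (j, c) * t.2.2 c
    refine Finset.measurable_sum _ fun c _ => Measurable.mul ?_ ?_
    · exact (measurable_pi_apply (j, c)).comp (measurable_fst.comp measurable_snd)
    · exact (measurable_pi_apply c).comp (measurable_snd.comp measurable_snd)

end Aux2

/-- **Width-weighted variance decomposition for the new hidden weights.**
Under the hypotheses of the full VT-constraint theorem (`x` with mean-zero unit-variance
entries; `Wx, Vx, Wu, Vu` mutually independent of each other and of `x`, each with mutually
independent mean-zero entries of common variance), the variance of every entry of
`h'' = Vu [u', u'', u'']` satisfies
`Var(h''_i) = vVu * (Ct * Var(u'_1) + (Ct1 - Ct) * Var(u''_1))`,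
where `u' = sx • Wx x` has dimension `Ct` and `u'' = Vx x` has dimension
`m = (Ct1 - Ct)/2`: the old-unit and new-unit feature variances contribute in proportion
to their respective widths `Ct` and `Ct1 - Ct`. -/
theorem vt_constraint_hDoublePrime_variance_decomposition
    {Ω : Type*} [MeasurableSpace Ω] (μ : Measure Ω) [IsProbabilityMeasure μ]
    (Cx Ct Ct1 m dWu dVu : ℕ) (hCt : 0 < Ct) (hm : 0 < m)
    (hCt1 : Ct1 = Ct + 2 * m)
    (x : Fin Cx → Ω → ℝ)
    (Wx : Fin Ct → Fin Cx → Ω → ℝ) (Vx : Fin m → Fin Cx → Ω → ℝ)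
    (Wu : Fin dWu → Fin Ct → Ω → ℝ)
    (Vu : Fin dVu → (Fin Ct ⊕ Fin m ⊕ Fin m) → Ω → ℝ)
    (vWx vVx vWu vVu sx : ℝ)
    -- measurability and square-integrability
    (hxmeas : ∀ j, Measurable (x j)) (hxL2 : ∀ j, MemLp (x j) 2 μ)
    (hWxmeas : ∀ i j, Measurable (Wx i j)) (hWxL2 : ∀ i j, MemLp (Wx i j) 2 μ)
    (hVxmeas : ∀ i j, Measurable (Vx i j)) (hVxL2 : ∀ i j, MemLp (Vx i j) 2 μ)
    (hWumeas : ∀ i j, Measurable (Wu i j)) (hWuL2 : ∀ i j, MemLp (Wu i j) 2 μ)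
    (hVumeas : ∀ i k, Measurable (Vu i k)) (hVuL2 : ∀ i k, MemLp (Vu i k) 2 μ)
    -- mean-zero unit-variance input entries
    (hxmean : ∀ j, ∫ ω, x j ω ∂μ = 0) (hxvar : ∀ j, variance (x j) μ = 1)
    -- mean-zero entries of common variance for each weight matrix
    (hWxmean : ∀ i j, ∫ ω, Wx i j ω ∂μ = 0)
    (hWxvar : ∀ i j, variance (Wx i j) μ = vWx)
    (hVxmean : ∀ i j, ∫ ω, Vx i j ω ∂μ = 0)
    (hVxvar : ∀ i j, variance (Vx i j) μ = vVx)
    (hWumean : ∀ i j, ∫ ω, Wu i j ω ∂μ = 0)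
    (hWuvar : ∀ i j, variance (Wu i j) μ = vWu)
    (hVumean : ∀ i k, ∫ ω, Vu i k ω ∂μ = 0)
    (hVuvar : ∀ i k, variance (Vu i k) μ = vVu)
    -- entries within each matrix are mutually independent
    (hWxindep : iIndepFun
      (fun p : Fin Ct × Fin Cx => Wx p.1 p.2) μ)
    (hVxindep : iIndepFun
      (fun p : Fin m × Fin Cx => Vx p.1 p.2) μ)
    (hWuindep : iIndepFun
      (fun p : Fin dWu × Fin Ct => Wu p.1 p.2) μ)
    (hVuindep : iIndepFun
      (fun p : Fin dVu × (Fin Ct ⊕ Fin m ⊕ Fin m) => Vu p.1 p.2) μ)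
    -- the four matrices and x are mutually independent
    (hmutual : iIndepFun (m := GrowIdx.codomMeasurableSpace Cx Ct m dWu dVu)
      (GrowIdx.rv Wx Vx Wu Vu x) μ)
    -- the grown features of the first layer
    (u' : Fin Ct → Ω → ℝ)
    (hu' : ∀ j ω, u' j ω = sx * ∑ k, Wx j k ω * x k ω)
    (u'' : Fin m → Ω → ℝ)
    (hu'' : ∀ j ω, u'' j ω = ∑ k, Vx j k ω * x k ω)
    -- the output of the newly added hidden weights on u_{t+1} = [u', u'', u'']
    (h'' : Fin dVu → Ω → ℝ)
    (hh'' : ∀ i ω, h'' i ω = ∑ k, Vu i k ω * (Sum.elim u' (Sum.elim u'' u'')) k ω) :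
    ∀ i : Fin dVu,
      variance (h'' i) μ
        = vVu * ((Ct : ℝ) * variance (u' ⟨0, hCt⟩) μ
                 + ((Ct1 : ℝ) - (Ct : ℝ)) * variance (u'' ⟨0, hm⟩) μ) := by
  classical
  intro i
  letI : ∀ g : GrowIdx, MeasurableSpace (GrowIdx.codom Cx Ct m dWu dVu g) :=
    GrowIdx.codomMeasurableSpace Cx Ct m dWu dVu
  -- measurability of the five blocks
  have hrvmeas : ∀ g : GrowIdx, Measurable (GrowIdx.rv Wx Vx Wu Vu x g) := by
    intro g; cases g
    · exact measurable_pi_lambda _ fun p => hWxmeas p.1 p.2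
    · exact measurable_pi_lambda _ fun p => hVxmeas p.1 p.2
    · exact measurable_pi_lambda _ fun p => hWumeas p.1 p.2
    · exact measurable_pi_lambda _ fun p => hVumeas p.1 p.2
    · exact measurable_pi_lambda _ fun j => hxmeas j
  -- pairwise block independences
  have hblockWx : ∀ (j : Fin Ct) (c d : Fin Cx),
      IndepFun (fun ω => (Wx j c ω, Wx j d ω)) (fun ω => (x c ω, x d ω)) μ := by
    intro j c d
    have hbase : IndepFun (GrowIdx.rv Wx Vx Wu Vu x .wx) (GrowIdx.rv Wx Vx Wu Vu x .inp) μ :=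
      hmutual.indepFun (i := GrowIdx.wx) (j := GrowIdx.inp) (by decide)
    have hφ : Measurable fun g : Fin Ct × Fin Cx → ℝ => (g (j, c), g (j, d)) :=
      (measurable_pi_apply _).prodMk (measurable_pi_apply _)
    have hψ : Measurable fun g : Fin Cx → ℝ => (g c, g d) :=
      (measurable_pi_apply _).prodMk (measurable_pi_apply _)
    exact hbase.comp hφ hψ
  have hblockVx : ∀ (j : Fin m) (c d : Fin Cx),
      IndepFun (fun ω => (Vx j c ω, Vx j d ω)) (fun ω => (x c ω, x d ω)) μ := by
    intro j c d
    have hbase : IndepFun (GrowIdx.rv Wx Vx Wu Vu x .vx) (GrowIdx.rv Wx Vx Wu Vu x .inp) μ :=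
      hmutual.indepFun (i := GrowIdx.vx) (j := GrowIdx.inp) (by decide)
    have hφ : Measurable fun g : Fin m × Fin Cx → ℝ => (g (j, c), g (j, d)) :=
      (measurable_pi_apply _).prodMk (measurable_pi_apply _)
    have hψ : Measurable fun g : Fin Cx → ℝ => (g c, g d) :=
      (measurable_pi_apply _).prodMk (measurable_pi_apply _)
    exact hbase.comp hφ hψ
  -- second moments of the input entries
  have hxsq : ∀ c, ∫ ω, (x c ω) ^ 2 ∂μ = 1 := by
    intro c
    have h := variance_eq_sub (hxL2 c)
    rw [hxvar c, hxmean c] at h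
    simpa using h.symm
  have hxsqsum : (∑ c : Fin Cx, ∫ ω, (x c ω) ^ 2 ∂μ) = (Cx : ℝ) := by
    rw [Finset.sum_congr rfl fun c _ => hxsq c]
    simp
  -- facts about u'
  have hu'eq : ∀ j, u' j = fun ω => sx * ∑ c, Wx j c ω * x c ω := fun j => funext (hu' j)
  have key' : ∀ j : Fin Ct,
      MemLp (fun ω => ∑ c, Wx j c ω * x c ω) 2 μ ∧
      (∫ ω, ∑ c, Wx j c ω * x c ω ∂μ) = 0 ∧
      variance (fun ω => ∑ c, Wx j c ω * x c ω) μ = vWx * ∑ c, ∫ ω, (x c ω) ^ 2 ∂μ := by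
    intro j
    exact aux_var_bilin μ (fun c => Wx j c) x vWx (hWxmeas j) (hWxL2 j) hxmeas hxL2
      (hWxmean j) (hWxvar j)
      (fun c d h => hWxindep.indepFun
        (show ((j, c) : Fin Ct × Fin Cx) ≠ (j, d) from fun he => h (congrArg Prod.snd he)))
      (hblockWx j)
  have hu'meas : ∀ j, Measurable (u' j) := by
    intro j; rw [hu'eq j]
    exact measurable_const.mul (Finset.measurable_sum _ fun c _ => (hWxmeas j c).mul (hxmeas c))
  have hu'L2 : ∀ j, MemLp (u' j) 2 μ := by
    intro j; rw [hu'eq j]; exact ((key' j).1).const_mul sx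
  have hu'mean : ∀ j, ∫ ω, u' j ω ∂μ = 0 := by
    intro j; rw [hu'eq j]
    rw [integral_const_mul, (key' j).2.1, mul_zero]
  have hu'var : ∀ j, variance (u' j) μ = sx ^ 2 * (vWx * (Cx : ℝ)) := by
    intro j; rw [hu'eq j, variance_const_mul, (key' j).2.2, hxsqsum]
  have hu'sq : ∀ j, ∫ ω, (u' j ω) ^ 2 ∂μ = sx ^ 2 * (vWx * (Cx : ℝ)) := by
    intro j
    have h := variance_eq_sub (hu'L2 j)
    rw [hu'var j, hu'mean j] at h
    simpa using h.symm
  -- facts about u''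
  have hu''eq : ∀ j, u'' j = fun ω => ∑ c, Vx j c ω * x c ω := fun j => funext (hu'' j)
  have key'' : ∀ j : Fin m,
      MemLp (fun ω => ∑ c, Vx j c ω * x c ω) 2 μ ∧
      (∫ ω, ∑ c, Vx j c ω * x c ω ∂μ) = 0 ∧
      variance (fun ω => ∑ c, Vx j c ω * x c ω) μ = vVx * ∑ c, ∫ ω, (x c ω) ^ 2 ∂μ := by
    intro j
    exact aux_var_bilin μ (fun c => Vx j c) x vVx (hVxmeas j) (hVxL2 j) hxmeas hxL2
      (hVxmean j) (hVxvar j)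
      (fun c d h => hVxindep.indepFun
        (show ((j, c) : Fin m × Fin Cx) ≠ (j, d) from fun he => h (congrArg Prod.snd he)))
      (hblockVx j)
  have hu''meas : ∀ j, Measurable (u'' j) := by
    intro j; rw [hu''eq j]
    exact Finset.measurable_sum _ fun c _ => (hVxmeas j c).mul (hxmeas c)
  have hu''L2 : ∀ j, MemLp (u'' j) 2 μ := by
    intro j; rw [hu''eq j]; exact (key'' j).1
  have hu''mean : ∀ j, ∫ ω, u'' j ω ∂μ = 0 := by
    intro j; rw [hu''eq j]; exact (key'' j).2.1
  have hu''var : ∀ j, variance (u'' j) μ = vVx * (Cx : ℝ) := by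
    intro j; rw [hu''eq j, (key'' j).2.2, hxsqsum]
  have hu''sq : ∀ j, ∫ ω, (u'' j ω) ^ 2 ∂μ = vVx * (Cx : ℝ) := by
    intro j
    have h := variance_eq_sub (hu''L2 j)
    rw [hu''var j, hu''mean j] at h
    simpa using h.symm
  -- facts about the concatenated vector U
  have hUmeas : ∀ k, Measurable ((Sum.elim u' (Sum.elim u'' u'')) k) := by
    rintro (j | j | j)
    · exact hu'meas j
    · exact hu''meas j
    · exact hu''meas j
  have hUL2 : ∀ k, MemLp ((Sum.elim u' (Sum.elim u'' u'')) k) 2 μ := by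
    rintro (j | j | j)
    · exact hu'L2 j
    · exact hu''L2 j
    · exact hu''L2 j
  -- independence of the Vu block from the (Wx, Vx, x) triple
  have hVuT : IndepFun (fun ω (p : Fin dVu × (Fin Ct ⊕ Fin m ⊕ Fin m)) => Vu p.1 p.2 ω)
      (growTriple Wx Vx x) μ := by
    have hd : Disjoint ({GrowIdx.vu} : Finset GrowIdx)
        ({GrowIdx.wx, GrowIdx.vx, GrowIdx.inp} : Finset GrowIdx) := by decide
    have hbase := hmutual.indepFun_finset {GrowIdx.vu}
      {GrowIdx.wx, GrowIdx.vx, GrowIdx.inp} hd hrvmeas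
    have hφ : Measurable fun f : ∀ a : ({GrowIdx.vu} : Finset GrowIdx),
        GrowIdx.codom Cx Ct m dWu dVu a => f ⟨GrowIdx.vu, by decide⟩ :=
      measurable_pi_apply _
    have hψ : Measurable fun f : ∀ a : ({GrowIdx.wx, GrowIdx.vx, GrowIdx.inp} : Finset GrowIdx),
        GrowIdx.codom Cx Ct m dWu dVu a =>
        (f ⟨GrowIdx.wx, by decide⟩, f ⟨GrowIdx.vx, by decide⟩, f ⟨GrowIdx.inp, by decide⟩) :=
      (measurable_pi_apply _).prodMk
        ((measurable_pi_apply _).prodMk (measurable_pi_apply _))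
    exact hbase.comp hφ hψ
  have hUPhi : ∀ k ω, (Sum.elim u' (Sum.elim u'' u'')) k ω
      = growPhi Cx Ct m sx k (growTriple Wx Vx x ω) := by
    rintro (j | j | j) ω
    · exact hu' j ω
    · exact hu'' j ω
    · exact hu'' j ω
  have hblockU : ∀ k l : Fin Ct ⊕ Fin m ⊕ Fin m,
      IndepFun (fun ω => (Vu i k ω, Vu i l ω))
        (fun ω => ((Sum.elim u' (Sum.elim u'' u'')) k ω,
                   (Sum.elim u' (Sum.elim u'' u'')) l ω)) μ := by
    intro k l
    have hc : IndepFun (fun ω => (Vu i k ω, Vu i l ω))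
        (fun ω => (growPhi Cx Ct m sx k (growTriple Wx Vx x ω),
                   growPhi Cx Ct m sx l (growTriple Wx Vx x ω))) μ := by
      have hφ : Measurable fun g : Fin dVu × (Fin Ct ⊕ Fin m ⊕ Fin m) → ℝ =>
          (g (i, k), g (i, l)) :=
        (measurable_pi_apply _).prodMk (measurable_pi_apply _)
      have hψ : Measurable fun t : (Fin Ct × Fin Cx → ℝ) × (Fin m × Fin Cx → ℝ) × (Fin Cx → ℝ) =>
          (growPhi Cx Ct m sx k t, growPhi Cx Ct m sx l t) :=
        (growPhi_measurable Cx Ct m sx k).prodMk (growPhi_measurable Cx Ct m sx l)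
      exact hVuT.comp hφ hψ
    have he : (fun ω => ((Sum.elim u' (Sum.elim u'' u'')) k ω,
          (Sum.elim u' (Sum.elim u'' u'')) l ω))
        = fun ω => (growPhi Cx Ct m sx k (growTriple Wx Vx x ω),
                    growPhi Cx Ct m sx l (growTriple Wx Vx x ω)) := by
      funext ω; rw [hUPhi k ω, hUPhi l ω]
    rw [he]; exact hc
  -- main application
  obtain ⟨-, -, hvar⟩ := aux_var_bilin μ (fun k => Vu i k) (Sum.elim u' (Sum.elim u'' u''))
    vVu (fun k => hVumeas i k) (fun k => hVuL2 i k) hUmeas hUL2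
    (fun k => hVumean i k) (fun k => hVuvar i k)
    (fun k l h => hVuindep.indepFun
      (show ((i, k) : Fin dVu × (Fin Ct ⊕ Fin m ⊕ Fin m)) ≠ (i, l) from
        fun he => h (congrArg Prod.snd he)))
    hblockU
  have hh''eq : h'' i = fun ω => ∑ k, Vu i k ω * (Sum.elim u' (Sum.elim u'' u'')) k ω :=
    funext (hh'' i)
  rw [hh''eq, hvar]
  have hsum : (∑ k : Fin Ct ⊕ Fin m ⊕ Fin m,
        ∫ ω, ((Sum.elim u' (Sum.elim u'' u'')) k ω) ^ 2 ∂μ)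
      = (Ct : ℝ) * (sx ^ 2 * (vWx * (Cx : ℝ)))
        + ((m : ℝ) * (vVx * (Cx : ℝ)) + (m : ℝ) * (vVx * (Cx : ℝ))) := by
    rw [Fintype.sum_sum_type, Fintype.sum_sum_type]
    simp only [Sum.elim_inl, Sum.elim_inr]
    rw [Finset.sum_congr rfl fun a _ => hu'sq a,
      Finset.sum_congr rfl fun b _ => hu''sq b]
    simp [Finset.sum_const, Finset.card_univ, nsmul_eq_mul]
  rw [hsum, hu'var ⟨0, hCt⟩, hu''var ⟨0, hm⟩]
  subst hCt1
  push_cast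
  ring
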